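/- Let X be a geodesic Gromov-hyperbolic metric space. For any x ∈ X and any Schottky set S ⊆ Isom(X), there is a constant L > 0 with the property that for every g ∈ Isom(X) there exists s ∈ S such that τ(sg) ≥ d(x, g·x) − L. -/

import Mathlib

open MeasureTheory ProbabilityTheory Filter Topology Pointwise

noncomputable section

namespace BMS

/-- The Gromov product `(y,z)_x := (d(y,x) + d(z,x) - d(y,z))/2`. -/
def gp {X : Type*} [MetricSpace X] (x y z : X) : ℝ :=
  (dist y x + dist z x - dist y z) / 2

/-- `X` is `δ`-hyperbolic. -/
def HypWith (δ : ℝ) (X : Type*) [MetricSpace X] : Prop :=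
  ∀ x₀ x₁ x₂ x₃ : X, min (gp x₀ x₃ x₁) (gp x₀ x₃ x₂) - δ ≤ gp x₀ x₁ x₂

/-- `X` is Gromov-hyperbolic. -/
def GromovHyperbolic (X : Type*) [MetricSpace X] : Prop :=
  ∃ δ : ℝ, 0 < δ ∧ HypWith δ X

/-- `X` is a geodesic metric space: any two points are joined by an isometrically
parametrized path. -/
def GeodesicSpace (X : Type*) [MetricSpace X] : Prop :=
  ∀ x y : X, ∃ f : ℝ → X, f 0 = x ∧ f (dist x y) = y ∧
    ∀ s ∈ Set.Icc (0 : ℝ) (dist x y), ∀ t ∈ Set.Icc (0 : ℝ) (dist x y),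
      dist (f s) (f t) = |s - t|

/-- The action of `Γ` on `X` is by isometries. -/
def IsIsomAction (Γ X : Type*) [Group Γ] [MetricSpace X] [MulAction Γ X] : Prop :=
  ∀ (g : Γ) (x y : X), dist (g • x) (g • y) = dist x y

/-- The positions of the random walk: `walk ω n = ω 1 * ⋯ * ω n`. -/
def walk {Γ Ω : Type*} [Group Γ] (ω : ℕ → Ω → Γ) : ℕ → Ω → Γ
  | 0 => fun _ => 1
  | n + 1 => fun ρ => walk ω n ρ * ω (n + 1) ρ

/-- Extended-real valued logarithm of an extended nonnegative real, with `elog 0 = ⊥`. -/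
def elog (x : ENNReal) : EReal :=
  if x = 0 then ⊥ else ((Real.log x.toReal : ℝ) : EReal)

/-- `(1/n)·log P(Z n ∈ R)`, as an extended real number. -/
def logProbRate {Ω : Type*} [MeasurableSpace Ω] (P : Measure Ω) (Z : ℕ → Ω → ℝ)
    (R : Set ℝ) (n : ℕ) : EReal :=
  (((n : ℝ)⁻¹ : ℝ) : EReal) * elog (P {ρ | Z n ρ ∈ R})

/-- The sequence of real random variables `Z n` satisfies a (full) large deviation
principle under `P` with rate function `I`. -/
def HasLDP {Ω : Type*} [MeasurableSpace Ω] (P : Measure Ω) (Z : ℕ → Ω → ℝ)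
    (I : ℝ → ENNReal) : Prop :=
  LowerSemicontinuous I ∧
  ∀ R : Set ℝ, MeasurableSet R →
    (-(⨅ α ∈ interior R, ((I α : EReal))) ≤ liminf (logProbRate P Z R) atTop ∧
      limsup (logProbRate P Z R) atTop ≤ -(⨅ α ∈ closure R, ((I α : EReal))))

/-- Weak large deviation principle: the lower bound holds for all measurable sets and
the upper bound for bounded measurable sets. -/
def HasWeakLDP {Ω : Type*} [MeasurableSpace Ω] (P : Measure Ω) (Z : ℕ → Ω → ℝ)
    (I : ℝ → ENNReal) : Prop :=
  LowerSemicontinuous I ∧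
  ∀ R : Set ℝ, MeasurableSet R →
    (-(⨅ α ∈ interior R, ((I α : EReal))) ≤ liminf (logProbRate P Z R) atTop ∧
      (Bornology.IsBounded R →
        limsup (logProbRate P Z R) atTop ≤ -(⨅ α ∈ closure R, ((I α : EReal)))))

/-- Convexity of an `[0,∞]`-valued function on `ℝ`. -/
def ConvexRate (I : ℝ → ENNReal) : Prop :=
  ∀ x y t : ℝ, 0 ≤ t → t ≤ 1 →
    I (t * x + (1 - t) * y) ≤ ENNReal.ofReal t * I x + ENNReal.ofReal (1 - t) * I y

/-- A rate function is proper if its sublevel sets are compact. -/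
def ProperRate (I : ℝ → ENNReal) : Prop :=
  ∀ c : ENNReal, c ≠ ⊤ → IsCompact {x : ℝ | I x ≤ c}

/-- The support of a measure on a countable discrete space. -/
def measSupport {Γ : Type*} [MeasurableSpace Γ] (μ : Measure Γ) : Set Γ :=
  {g | μ {g} ≠ 0}

/-- `S` is a Schottky set with respect to the basepoint `z0`. -/
def IsSchottky {Γ X : Type*} [Group Γ] [MetricSpace X] [MulAction Γ X]
    (z0 : X) (S : Set Γ) : Prop :=
  S.Finite ∧ S.Nonempty ∧ ∃ C : ℝ, 0 < C ∧ ∀ y z : X,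
    (2 / 3 : ℝ) * (S.ncard : ℝ) ≤ (({s ∈ S | gp z0 y (s • z) ≤ C} : Set Γ).ncard : ℝ)

/-- `u : ℤ → X` is a quasi-geodesic. -/
def QuasiGeodZ {X : Type*} [MetricSpace X] (u : ℤ → X) : Prop :=
  ∃ lam C : ℝ, 1 ≤ lam ∧ 0 ≤ C ∧ ∀ m n : ℤ,
    lam⁻¹ * |(m : ℝ) - (n : ℝ)| - C ≤ dist (u m) (u n) ∧
      dist (u m) (u n) ≤ lam * |(m : ℝ) - (n : ℝ)| + C

/-- `g` is a loxodromic isometry: some (equivalently, any) orbit map `n ↦ g^n • x`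
is a quasi-geodesic. -/
def IsLoxodromic (X : Type*) {Γ : Type*} [MetricSpace X] [Group Γ] [MulAction Γ X]
    (g : Γ) : Prop :=
  ∃ x : X, QuasiGeodZ (fun n : ℤ => (g ^ n) • x)

/-- The forward (`s = true`) or backward (`s = false`) orbit ray of `g` from `z0`. -/
def raySeq {Γ X : Type*} [Group Γ] [MetricSpace X] [MulAction Γ X]
    (z0 : X) (g : Γ) (s : Bool) : ℕ → X :=
  fun n => (g ^ (if s then (n : ℤ) else -(n : ℤ))) • z0

/-- Two sequences define the same point of the Gromov boundary. -/
def SameEnd {X : Type*} [MetricSpace X] (z0 : X) (u v : ℕ → X) : Prop :=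
  Tendsto (fun n => gp z0 (u n) (v n)) atTop atTop

/-- `g` and `h` are independent loxodromic elements: both are loxodromic and their
four boundary fixed points are pairwise distinct. -/
def IndepLox {Γ X : Type*} [Group Γ] [MetricSpace X] [MulAction Γ X]
    (z0 : X) (g h : Γ) : Prop :=
  IsLoxodromic X g ∧ IsLoxodromic X h ∧
  (¬ SameEnd z0 (raySeq z0 g true) (raySeq z0 g false)) ∧
  (¬ SameEnd z0 (raySeq z0 h true) (raySeq z0 h false)) ∧
  (∀ s t : Bool, ¬ SameEnd z0 (raySeq z0 g s) (raySeq z0 h t))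

/-- A set `B` of isometries is non-elementary: the subsemigroup it generates contains
two independent loxodromic elements. -/
def NonElementarySet {Γ X : Type*} [Group Γ] [MetricSpace X] [MulAction Γ X]
    (z0 : X) (B : Set Γ) : Prop :=
  ∃ g h : Γ, g ∈ Subsemigroup.closure B ∧ h ∈ Subsemigroup.closure B ∧ IndepLox z0 g h

/-- A probability measure is non-elementary if its support is. -/
def NonElementary {Γ X : Type*} [Group Γ] [MeasurableSpace Γ] [MetricSpace X] [MulAction Γ X]
    (z0 : X) (μ : Measure Γ) : Prop :=
  NonElementarySet z0 (measSupport μ)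

/-- The translation length `τ(g) := inf_x d(x, g•x)`. -/
def translationLength (X : Type*) {Γ : Type*} [MetricSpace X] [Group Γ] [MulAction Γ X]
    (g : Γ) : ℝ :=
  ⨅ x : X, dist x (g • x)

/-- The asymptotic (stable) translation length `ℓ(g) = lim_n d(g^n • z0, z0)/n`;
by Fekete's subadditivity lemma the limit equals the infimum over `n ≥ 1`. -/
def stableLength {Γ X : Type*} [Group Γ] [MetricSpace X] [MulAction Γ X]
    (z0 : X) (g : Γ) : ℝ :=
  ⨅ n : ℕ, dist ((g ^ (n + 1)) • z0) z0 / (n + 1)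

/-- `B` is non-arithmetic: some power `B^n` contains two elements with different
asymptotic translation lengths. -/
def NonArithmetic {Γ X : Type*} [Group Γ] [MetricSpace X] [MulAction Γ X]
    (z0 : X) (B : Set Γ) : Prop :=
  ∃ (n : ℕ) (g₁ g₂ : Γ), g₁ ∈ B ^ n ∧ g₂ ∈ B ^ n ∧
    stableLength z0 g₁ ≠ stableLength z0 g₂

/-- `sup_{g ∈ B^n} d(g•z0, z0)`, valued in `[0,∞]`. -/
def dispSup {Γ X : Type*} [Group Γ] [MetricSpace X] [MulAction Γ X]
    (z0 : X) (B : Set Γ) (n : ℕ) : ENNReal :=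
  ⨆ g ∈ B ^ n, ENNReal.ofReal (dist (g • z0) z0)

/-- `inf_{g ∈ B^n} d(g•z0, z0)`, valued in `[0,∞]`. -/
def dispInf {Γ X : Type*} [Group Γ] [MetricSpace X] [MulAction Γ X]
    (z0 : X) (B : Set Γ) (n : ℕ) : ENNReal :=
  ⨅ g ∈ B ^ n, ENNReal.ofReal (dist (g • z0) z0)

/-- `μ` has a finite exponential moment:
`E[exp (λ·d(z0, ω 1 • z0))] < ∞` for some `λ > 0`. -/
def FiniteExpMoment {Γ Ω X : Type*} [Group Γ] [MetricSpace X] [MulAction Γ X]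
    [MeasurableSpace Ω] (P : Measure Ω) (ω : ℕ → Ω → Γ) (z0 : X) : Prop :=
  ∃ lam : ℝ, 0 < lam ∧
    Integrable (fun ρ => Real.exp (lam * dist ((ω 1 ρ) • z0) z0)) P

/-- The increments `ω i` are i.i.d. with common law `μ`. -/
def IIDWalk {Γ Ω : Type*} [Group Γ] [MeasurableSpace Γ] [MeasurableSpace Ω]
    (P : Measure Ω) (ω : ℕ → Ω → Γ) (μ : Measure Γ) : Prop :=
  (∀ i, Measurable (ω i)) ∧
  iIndepFun ω P ∧
  ∀ i, P.map (ω i) = μ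

/-- `-(1/n)·log P(d(z_n, z0) ≤ a·n)`. -/
def belowRate {Γ Ω X : Type*} [Group Γ] [MetricSpace X] [MulAction Γ X]
    [MeasurableSpace Ω] (P : Measure Ω) (ω : ℕ → Ω → Γ) (z0 : X) (a : ℝ) (n : ℕ) : EReal :=
  -((((n : ℝ)⁻¹ : ℝ) : EReal) * elog (P {ρ | dist ((walk ω n ρ) • z0) z0 ≤ a * n}))

/-- `-(1/n)·log P(d(z_n, z0) ≥ a·n)`. -/
def aboveRate {Γ Ω X : Type*} [Group Γ] [MetricSpace X] [MulAction Γ X]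
    [MeasurableSpace Ω] (P : Measure Ω) (ω : ℕ → Ω → Γ) (z0 : X) (a : ℝ) (n : ℕ) : EReal :=
  -((((n : ℝ)⁻¹ : ℝ) : EReal) * elog (P {ρ | a * n ≤ dist ((walk ω n ρ) • z0) z0}))

end BMS
namespace BMS

/-!
In a `δ`-hyperbolic space, if the displacement `d(z₀, h z₀)` of an isometry `h` exceeds
`2 (h z₀, h⁻¹ z₀)_{z₀} + 2δ`, hyperbolicity keeps the orbit `hⁿ z₀` from backtracking, so
each step moves it further from `z₀` by at least `d(z₀, h z₀) - 2 (h z₀, h⁻¹ z₀)_{z₀} - 2δ`;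
this linear growth of the orbit bounds `τ(h)` from below. Apply this to `h = s g`, where the
Schottky property provides `s ∈ S` with `(g⁻¹ z₀, s g z₀)_{z₀}` bounded: since `S` is finite,
replacing `g⁻¹ z₀` by `h⁻¹ z₀` and `d(z₀, g z₀)` by `d(z₀, h z₀)` costs a bounded amount.
-/

section GromovProduct

variable {X : Type*} [MetricSpace X]

lemma gp_nonneg (x y z : X) : 0 ≤ gp x y z := by
  unfold gp
  linarith [dist_triangle y x z, dist_comm x z]

lemma gp_comm (x y z : X) : gp x y z = gp x z y := by
  unfold gp
  rw [dist_comm y z]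
  ring

@[simp]
lemma gp_self_left (x z : X) : gp x x z = 0 := by
  simp [gp, dist_comm]

lemma gp_le_gp_add_dist (x y z z' : X) : gp x y z ≤ gp x y z' + dist z z' := by
  unfold gp
  linarith [dist_triangle z z' x, dist_triangle y z z', dist_comm z z', dist_comm z' x]

lemma dist_eq_add_gp_sub_gp (x y z : X) : dist x z = dist x y + dist y z - 2 * gp y x z := by
  unfold gp
  linarith [dist_comm x y, dist_comm y z]

end GromovProduct

namespace IsIsomAction

variable {X : Type*} [MetricSpace X] {Γ : Type*} [Group Γ] [MulAction Γ X]
  (hiso : IsIsomAction Γ X)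
include hiso

lemma gp_smul (u : Γ) (x y z : X) : gp (u • x) (u • y) (u • z) = gp x y z := by
  unfold gp
  rw [hiso u y x, hiso u z x, hiso u y z]

lemma dist_inv_smul (s : Γ) (z : X) : dist (s⁻¹ • z) z = dist (s • z) z := by
  rw [← hiso s, smul_inv_smul, dist_comm]

lemma dist_smul_le_add (g : Γ) (x z : X) :
    dist x (g • x) ≤ dist z (g • z) + 2 * dist x z := by
  linarith [dist_triangle x z (g • x), dist_triangle z (g • z) (g • x), hiso g z x, dist_comm z x]

lemma dist_pow_smul_le (h : Γ) (y : X) (n : ℕ) : dist y (h ^ n • y) ≤ n * dist y (h • y) := by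
  induction n with
  | zero => simp
  | succ n ih =>
    have hstep : dist (h ^ n • y) (h ^ (n + 1) • y) = dist y (h • y) := by
      rw [pow_succ, mul_smul, hiso]
    push_cast
    linarith [dist_triangle y (h ^ n • y) (h ^ (n + 1) • y)]

lemma le_translationLength_of_linear_growth {h : Γ} {z0 : X} {K : ℝ}
    (hgrowth : ∀ n : ℕ, n * K ≤ dist z0 (h ^ n • z0)) : K ≤ translationLength X h := by
  have : Nonempty X := ⟨z0⟩
  refine le_ciInf fun y => le_of_not_gt fun hlt => ?_
  have hbound (n : ℕ) : n * (K - dist y (h • y)) ≤ 2 * dist z0 y := by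
    linarith [hgrowth n, hiso.dist_smul_le_add (h ^ n) z0 y, hiso.dist_pow_smul_le h y n]
  obtain ⟨n, hn⟩ := exists_nat_gt (2 * dist z0 y / (K - dist y (h • y)))
  linarith [(div_lt_iff₀ (sub_pos.mpr hlt)).mp hn, hbound n]

end IsIsomAction

lemma translationLength_nonneg (X : Type*) {Γ : Type*} [MetricSpace X] [Group Γ]
    [MulAction Γ X] (g : Γ) : 0 ≤ translationLength X g :=
  Real.iInf_nonneg fun _ => dist_nonneg

namespace HypWith

variable {X : Type*} [MetricSpace X] {Γ : Type*} [Group Γ] [MulAction Γ X] {δ : ℝ}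
  (hhyp : HypWith δ X) (hiso : IsIsomAction Γ X)
include hhyp hiso

/-- The Gromov product at `hⁿ z₀` of its neighbours `z₀` and `hⁿ⁺¹ z₀` stays bounded: by
hyperbolicity at `hⁿ⁺¹ z₀`, a large value at step `n + 1` would force a small value of
`(hⁿ z₀, z₀)_{hⁿ⁺¹ z₀} = d(z₀, h z₀) - (z₀, hⁿ⁺¹ z₀)_{hⁿ z₀}`, contradicting the bound at step `n`. -/
lemma gp_pow_smul_le (hδ : 0 ≤ δ) {z0 : X} {h : Γ}
    (hdisp : 2 * gp z0 (h • z0) (h⁻¹ • z0) + 2 * δ < dist z0 (h • z0)) (n : ℕ) :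
    gp (h ^ n • z0) z0 (h ^ (n + 1) • z0) ≤ gp z0 (h • z0) (h⁻¹ • z0) + δ := by
  induction n with
  | zero => simpa using add_nonneg (gp_nonneg z0 (h • z0) (h⁻¹ • z0)) hδ
  | succ n ih =>
    have hturn : gp (h ^ (n + 1) • z0) (h ^ n • z0) (h ^ (n + 1 + 1) • z0)
        = gp z0 (h • z0) (h⁻¹ • z0) := by
      have hprev : h ^ n • z0 = h ^ (n + 1) • h⁻¹ • z0 := by
        rw [← mul_smul, pow_succ, mul_inv_cancel_right]
      have hnext : h ^ (n + 1 + 1) • z0 = h ^ (n + 1) • h • z0 := by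
        rw [← mul_smul, ← pow_succ]
      rw [hprev, hnext, hiso.gp_smul, gp_comm]
    have hstep : dist (h ^ n • z0) (h ^ (n + 1) • z0) = dist z0 (h • z0) := by
      rw [pow_succ, mul_smul, hiso]
    have hback : gp (h ^ (n + 1) • z0) z0 (h ^ n • z0)
        = dist z0 (h • z0) - gp (h ^ n • z0) z0 (h ^ (n + 1) • z0) := by
      unfold gp
      linarith [dist_comm (h ^ n • z0) (h ^ (n + 1) • z0)]
    have hmin := hhyp (h ^ (n + 1) • z0) (h ^ n • z0) (h ^ (n + 1 + 1) • z0) z0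
    rw [hturn, hback] at hmin
    rcases min_le_iff.mp (show _ ≤ _ + δ from sub_le_iff_le_add.mp hmin) with hc | hc
    · linarith
    · exact hc

lemma mul_le_dist_pow_smul (hδ : 0 ≤ δ) {z0 : X} {h : Γ}
    (hdisp : 2 * gp z0 (h • z0) (h⁻¹ • z0) + 2 * δ < dist z0 (h • z0)) (n : ℕ) :
    n * (dist z0 (h • z0) - 2 * gp z0 (h • z0) (h⁻¹ • z0) - 2 * δ) ≤ dist z0 (h ^ n • z0) := by
  induction n with
  | zero => simp
  | succ n ih =>
    have hstep : dist (h ^ n • z0) (h ^ (n + 1) • z0) = dist z0 (h • z0) := by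
      rw [pow_succ, mul_smul, hiso]
    have hsplit := dist_eq_add_gp_sub_gp z0 (h ^ n • z0) (h ^ (n + 1) • z0)
    push_cast
    linarith [hhyp.gp_pow_smul_le hiso hδ hdisp n]

lemma sub_gp_le_translationLength (hδ : 0 ≤ δ) (z0 : X) (h : Γ) :
    dist z0 (h • z0) - 2 * gp z0 (h • z0) (h⁻¹ • z0) - 2 * δ ≤ translationLength X h := by
  by_cases hdisp : 2 * gp z0 (h • z0) (h⁻¹ • z0) + 2 * δ < dist z0 (h • z0)
  · exact hiso.le_translationLength_of_linear_growth (hhyp.mul_le_dist_pow_smul hiso hδ hdisp)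
  · linarith [translationLength_nonneg X h]

lemma sub_gp_le_translationLength_mul (hδ : 0 ≤ δ) (z0 : X) (s g : Γ) :
    dist z0 (g • z0) - 2 * gp z0 (g⁻¹ • z0) (s • g • z0) - 3 * dist (s • z0) z0 - 2 * δ
      ≤ translationLength X (s * g) := by
  have hinv : dist ((s * g)⁻¹ • z0) (g⁻¹ • z0) = dist (s • z0) z0 := by
    rw [mul_inv_rev, mul_smul, hiso, hiso.dist_inv_smul]
  have hdist : dist z0 (s • g • z0) = dist (s⁻¹ • z0) (g • z0) := by
    rw [← hiso s⁻¹, inv_smul_smul]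
  have hgp := gp_le_gp_add_dist z0 ((s * g) • z0) ((s * g)⁻¹ • z0) (g⁻¹ • z0)
  rw [mul_smul, gp_comm z0 (s • g • z0) (g⁻¹ • z0)] at hgp
  have := hhyp.sub_gp_le_translationLength hiso hδ z0 (s * g)
  rw [mul_smul] at this
  linarith [dist_triangle z0 (s⁻¹ • z0) (g • z0), dist_comm z0 (s⁻¹ • z0),
    hiso.dist_inv_smul s z0]

end HypWith

lemma IsSchottky.exists_gp_le {Γ X : Type*} [Group Γ] [MetricSpace X] [MulAction Γ X]
    {z0 : X} {S : Set Γ} (hS : IsSchottky z0 S) :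
    ∃ C : ℝ, 0 < C ∧ ∀ y z : X, ∃ s ∈ S, gp z0 y (s • z) ≤ C := by
  obtain ⟨hfin, hne, C, hC, hsch⟩ := hS
  refine ⟨C, hC, fun y z => ?_⟩
  have hcard : (0 : ℝ) < S.ncard := by exact_mod_cast (Set.ncard_pos hfin).mpr hne
  have hgood : {s ∈ S | gp z0 y (s • z) ≤ C}.ncard ≠ 0 := by
    intro h0
    linarith [hsch y z, show ((({s ∈ S | gp z0 y (s • z) ≤ C} : Set Γ).ncard : ℕ) : ℝ) = 0 by
      exact_mod_cast h0]
  exact Set.nonempty_of_ncard_ne_zero hgood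

lemma _root_.Set.Finite.exists_dist_smul_le {Γ X : Type*} [Group Γ] [MetricSpace X]
    [MulAction Γ X] {S : Set Γ} (hS : S.Finite) (z0 : X) :
    ∃ D : ℝ, 0 ≤ D ∧ ∀ s ∈ S, dist (s • z0) z0 ≤ D := by
  obtain ⟨D, hD⟩ := (hS.image fun s => dist (s • z0) z0).bddAbove
  exact ⟨max D 0, le_max_right _ _, fun s hs => (hD ⟨s, hs, rfl⟩).trans (le_max_left _ _)⟩

theorem schottky_translation_length_general
    {X : Type*} [MetricSpace X] {Γ : Type*} [Group Γ] [MulAction Γ X]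
    (hiso : IsIsomAction Γ X) (hhyp : GromovHyperbolic X)
    (z0 x : X) (S : Set Γ) (hS : IsSchottky z0 S) :
    ∃ L : ℝ, 0 < L ∧ ∀ g : Γ, ∃ s ∈ S,
      dist x (g • x) - L ≤ translationLength X (s * g) := by
  obtain ⟨δ, hδ, hδhyp⟩ := hhyp
  obtain ⟨C, hC, hgp⟩ := hS.exists_gp_le
  obtain ⟨D, hD, hdist⟩ := hS.1.exists_dist_smul_le z0
  refine ⟨2 * C + 3 * D + 2 * δ + 2 * dist x z0, by positivity, fun g => ?_⟩
  obtain ⟨s, hs, hsC⟩ := hgp (g⁻¹ • z0) (g • z0)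
  refine ⟨s, hs, ?_⟩
  linarith [hδhyp.sub_gp_le_translationLength_mul hiso hδ.le z0 s g, hdist s hs,
    hiso.dist_smul_le_add g x z0]

/-- **Lemma (Schottky sets and translation lengths).** Let `X` be a geodesic
Gromov-hyperbolic space. For any `x ∈ X` and any Schottky set `S`, there is `L > 0` such
that every isometry `g` admits `s ∈ S` with `τ(s g) ≥ d(x, g•x) - L`. -/
theorem schottky_translation_length
    {X : Type*} [MetricSpace X] {Γ : Type*} [Group Γ] [MulAction Γ X]
    (hiso : IsIsomAction Γ X) (hgeo : GeodesicSpace X) (hhyp : GromovHyperbolic X)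
    (z0 x : X) (S : Set Γ) (hS : IsSchottky z0 S) :
    ∃ L : ℝ, 0 < L ∧ ∀ g : Γ, ∃ s ∈ S,
      dist x (g • x) - L ≤ translationLength X (s * g) :=
  schottky_translation_length_general hiso hhyp z0 x S hS

end BMS
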